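/- arXiv:0711.0632 — 2 statements merged into one kernel-verified Lean document; each statement's English description precedes it below -/
import Mathlib

section
/- Let $m$ and $b$ be positive integers, let $f = 4m/\gcd(4m,b)$, and let $Q(n)$ denote the greatest positive integer whose square divides $n$. Then the number of residues $\lambda$ modulo $2m$ with $b\lambda^2 \equiv 0 \pmod{4m}$ equals $(2m/f) \cdot Q(f)$. -/
/-!
Writing `f = 4m / gcd(4m, b)`, the condition `4m ∣ b λ²` is `f ∣ λ²`. Since `Q(f)` has
`p`-adic valuation `⌊v_p(f)/2⌋`, comparing valuations shows `f ∣ λ² ↔ f / Q(f) ∣ λ`, and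
`f / Q(f)` divides `2m` because `f ∣ (2m)²`. So the solutions are the multiples of `f / Q(f)`
in `[0, 2m)`, of which there are `2m / (f / Q(f)) = (2m / f) · Q(f)`.
-/

def Qmax (n : ℕ) : ℕ := Nat.findGreatest (fun d => d ^ 2 ∣ n) n

open Finset

lemma Nat.dvd_mul_iff_div_gcd_dvd {a b c : ℕ} (ha : a ≠ 0) : a ∣ b * c ↔ a / a.gcd b ∣ c := by
  have hg : 0 < a.gcd b := Nat.gcd_pos_of_pos_left b (Nat.pos_of_ne_zero ha)
  set g := a.gcd b
  calc a ∣ b * c ↔ g * (a / g) ∣ g * (b / g * c) := by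
        rw [Nat.mul_div_cancel' (Nat.gcd_dvd_left a b), ← mul_assoc,
          Nat.mul_div_cancel' (Nat.gcd_dvd_right a b)]
    _ ↔ a / g ∣ b / g * c := Nat.mul_dvd_mul_iff_left hg
    _ ↔ a / g ∣ c := (Nat.coprime_div_gcd_div_gcd hg).dvd_mul_left

lemma card_filter_range_dvd {k N : ℕ} (hkN : k ∣ N) : #{l ∈ range N | k ∣ l} = N / k := by
  obtain ⟨t, rfl⟩ := hkN
  rcases Nat.eq_zero_or_pos k with rfl | hk
  · simp
  have : {l ∈ range (k * t) | k ∣ l} = (range t).map ⟨(k * ·), mul_right_injective₀ hk.ne'⟩ := by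
    ext l
    simp only [mem_filter, mem_range, mem_map, Function.Embedding.coeFn_mk]
    constructor
    · rintro ⟨hl, i, rfl⟩
      exact ⟨i, lt_of_mul_lt_mul_left hl hk.le, rfl⟩
    · rintro ⟨i, hi, rfl⟩
      exact ⟨Nat.mul_lt_mul_of_pos_left hi hk, dvd_mul_right k i⟩
  rw [this, card_map, card_range, Nat.mul_div_cancel_left t hk]

lemma Qmax_zero : Qmax 0 = 0 := Nat.findGreatest_zero

lemma Qmax_sq_dvd (n : ℕ) : Qmax n ^ 2 ∣ n := by
  rcases Nat.eq_zero_or_pos n with rfl | hn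
  · simp [Qmax_zero]
  exact Nat.findGreatest_spec (P := fun d => d ^ 2 ∣ n) hn (by simp)

lemma Qmax_dvd (n : ℕ) : Qmax n ∣ n := (dvd_pow_self _ two_ne_zero).trans (Qmax_sq_dvd n)

lemma le_Qmax {n d : ℕ} (hn : n ≠ 0) (hd : d ^ 2 ∣ n) : d ≤ Qmax n :=
  Nat.le_findGreatest
    ((Nat.le_self_pow two_ne_zero d).trans (Nat.le_of_dvd (Nat.pos_of_ne_zero hn) hd)) hd

lemma Qmax_pos {n : ℕ} (hn : n ≠ 0) : 0 < Qmax n := le_Qmax hn (by simp)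

lemma div_Qmax_ne_zero {n : ℕ} (hn : n ≠ 0) : n / Qmax n ≠ 0 :=
  (Nat.div_ne_zero_iff_of_dvd (Qmax_dvd n)).2 ⟨hn, (Qmax_pos hn).ne'⟩

lemma factorization_Qmax (n p : ℕ) : (Qmax n).factorization p = n.factorization p / 2 := by
  rcases eq_or_ne n 0 with rfl | hn
  · simp [Qmax_zero]
  by_cases hp : p.Prime
  swap
  · simp [Nat.factorization_eq_zero_of_not_prime _ hp]
  obtain ⟨t, ht⟩ := Qmax_sq_dvd n
  set Q := Qmax n
  have hQ : 0 < Q := Qmax_pos hn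
  have ht0 : t ≠ 0 := by rintro rfl; simp_all
  have hvn : n.factorization p = 2 * Q.factorization p + t.factorization p := by
    rw [ht, Nat.factorization_mul (pow_ne_zero 2 hQ.ne') ht0, Nat.factorization_pow]
    simp
  suffices ¬ 2 ≤ t.factorization p by omega
  -- otherwise `(Q * p) ^ 2 ∣ Q ^ 2 * t = n`, against the maximality of `Q`
  intro hpt
  have hpt : p ^ 2 ∣ t := (hp.pow_dvd_iff_le_factorization ht0).2 hpt
  have hQp : Q * p ≤ Q := le_Qmax hn (by rw [ht, mul_pow]; exact mul_dvd_mul_left _ hpt)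
  nlinarith [hp.two_le]

lemma dvd_sq_iff_div_Qmax_dvd {f : ℕ} (hf : f ≠ 0) (l : ℕ) : f ∣ l ^ 2 ↔ f / Qmax f ∣ l := by
  rcases eq_or_ne l 0 with rfl | hl
  · simp
  rw [← Nat.factorization_le_iff_dvd hf (pow_ne_zero 2 hl),
    ← Nat.factorization_le_iff_dvd (div_Qmax_ne_zero hf) hl, Finsupp.le_def, Finsupp.le_def]
  refine forall_congr' fun p => ?_
  rw [Nat.factorization_div (Qmax_dvd f), Nat.factorization_pow, Finsupp.tsub_apply,
    Finsupp.smul_apply, factorization_Qmax, smul_eq_mul]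
  omega

theorem count_lambda_eq_general (m b : ℕ) (hm : 0 < m) :
    (((Finset.range (2 * m)).filter (fun l => 4 * m ∣ b * l ^ 2)).card : ℚ) =
      (2 * m : ℚ) / (4 * m / Nat.gcd (4 * m) b : ℕ) *
        Qmax (4 * m / Nat.gcd (4 * m) b) := by
  set f := 4 * m / Nat.gcd (4 * m) b
  have h4m : 4 * m ≠ 0 := by positivity
  have hf : f ≠ 0 :=
    (Nat.div_ne_zero_iff_of_dvd (Nat.gcd_dvd_left _ _)).2 ⟨h4m, Nat.gcd_ne_zero_left h4m⟩
  have hcond (l : ℕ) : 4 * m ∣ b * l ^ 2 ↔ f / Qmax f ∣ l := by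
    rw [Nat.dvd_mul_iff_div_gcd_dvd h4m, dvd_sq_iff_div_Qmax_dvd hf]
  have hk : f / Qmax f ∣ 2 * m := by
    rw [← dvd_sq_iff_div_Qmax_dvd hf]
    exact (Nat.div_dvd_of_dvd (Nat.gcd_dvd_left _ _)).trans ⟨m, by ring⟩
  rw [filter_congr fun l _ => hcond l, card_filter_range_dvd hk,
    Nat.cast_div hk (by exact_mod_cast div_Qmax_ne_zero hf),
    Nat.cast_div (Qmax_dvd f) (by exact_mod_cast (Qmax_pos hf).ne')]
  have hQ : (Qmax f : ℚ) ≠ 0 := by exact_mod_cast (Qmax_pos hf).ne'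
  push_cast
  field_simp

/-- For positive integers `m`, `b` and `f = 4m / gcd(4m,b)`,
the number of residues `λ` modulo `2m` with `b λ² ≡ 0 (mod 4m)` equals `(2m/f) · Q(f)`. -/
theorem count_lambda_eq (m b : ℕ) (hm : 0 < m) (hb : 0 < b) :
    (((Finset.range (2 * m)).filter (fun l => 4 * m ∣ b * l ^ 2)).card : ℚ) =
      (2 * m : ℚ) / (4 * m / Nat.gcd (4 * m) b : ℕ) *
        Qmax (4 * m / Nat.gcd (4 * m) b) :=
  count_lambda_eq_general m b hm
end

section
/- Every elliptic element of $\mathrm{SL}_2(\mathbb{Z})$ (i.e., an element of trace $t$ with $|t| < 2$) is conjugate in $\mathrm{SL}_2(\mathbb{Z})$ to one of the six matrices $\pm\begin{pmatrix}0&-1\\1&0\end{pmatrix}$, $\pm\begin{pmatrix}0&-1\\1&1\end{pmatrix}$, $\pm\begin{pmatrix}-1&-1\\1&0\end{pmatrix}$. -/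
/-!
Write `A = [[a, b], [c, d]]` with trace `t`. The identity `(a - d)² + 4bc = t² - 4 < 0` forces
`bc < 0`. Conjugating by `T ^ n` keeps `c` and `t` and replaces `a - d` by `a - d + 2nc`, which can
be made at most `|c|` in absolute value; the identity then bounds the new `|b|` by `|c|`. Since `S`
swaps `|b|` and `|c|`, the quantity `|b| + |c|` decreases until `|b| = |c|`. At that point the
identity forces `|b| = |c| = 1` and `ad = 0`, which leaves ten matrices, each of them one of the six
representatives or conjugate to one by `S`.
-/

open Matrix
open scoped MatrixGroups

namespace Matrix.SpecialLinearGroup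

variable {R : Type*} [CommRing R]

theorem SL2_sq_sub_add_four_mul_eq (A : SL(2, R)) :
    (A 0 0 - A 1 1) ^ 2 + 4 * (A 0 1 * A 1 0) = (A 0 0 + A 1 1) ^ 2 - 4 := by
  have h := A.2
  rw [det_fin_two] at h
  linear_combination (-4 : R) * h

theorem trace_conj {n : Type*} [Fintype n] [DecidableEq n] (g A : SpecialLinearGroup n R) :
    trace ((g * A * g⁻¹ : SpecialLinearGroup n R) : Matrix n n R) = trace (A : Matrix n n R) := by
  rw [coe_mul, trace_mul_comm, ← coe_mul, inv_mul_cancel_left]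

end Matrix.SpecialLinearGroup

theorem Int.exists_abs_add_two_mul_mul_le (e : ℤ) {c : ℤ} (hc : c ≠ 0) :
    ∃ n : ℤ, |e + 2 * c * n| ≤ |c| := by
  have hm : 0 < 2 * c.natAbs := by omega
  refine ⟨-(e.bdiv (2 * c.natAbs) * c.sign), ?_⟩
  have hbmod : e + 2 * c * -(e.bdiv (2 * c.natAbs) * c.sign) = e.bmod (2 * c.natAbs) := by
    rw [Int.bmod_eq_self_sub_mul_bdiv]
    push_cast
    rw [← Int.sign_mul_self_eq_abs]
    ring
  rw [hbmod, abs_le, Int.abs_eq_natAbs]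
  have := Int.le_bmod (x := e) hm
  have := Int.bmod_lt (x := e) hm
  omega

theorem Int.abs_le_one_of_sq_mem_Ico {x y : ℤ} (h₁ : 4 * y ^ 2 - 4 ≤ x ^ 2) (h₂ : x ^ 2 < 4 * y ^ 2) :
    |y| ≤ 1 := by
  have hlt : |x| < 2 * |y| := by
    rw [← abs_two, ← abs_mul, ← sq_lt_sq]
    linarith
  have hle : x ^ 2 ≤ (2 * |y| - 1) ^ 2 := by
    rw [← sq_abs x]
    exact pow_le_pow_left₀ (abs_nonneg x) (by omega) 2
  nlinarith [sq_abs y]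

namespace ModularGroup

theorem coe_T_zpow_conj (n : ℤ) (A : SL(2, ℤ)) :
    ((T ^ n * A * (T ^ n)⁻¹ : SL(2, ℤ)) : Matrix (Fin 2) (Fin 2) ℤ) =
      !![A 0 0 + n * A 1 0, A 0 1 + n * (A 1 1 - A 0 0) - n ^ 2 * A 1 0;
        A 1 0, A 1 1 - n * A 1 0] := by
  rw [Matrix.SpecialLinearGroup.coe_mul, Matrix.SpecialLinearGroup.coe_mul,
    Matrix.SpecialLinearGroup.coe_inv,
    coe_T_zpow, adjugate_fin_two_of, eta_fin_two (A : Matrix _ _ ℤ), mul_fin_two, mul_fin_two]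
  congrm !![?_, ?_; ?_, ?_] <;> simp <;> ring

theorem coe_S_conj (A : SL(2, ℤ)) :
    ((S * A * S⁻¹ : SL(2, ℤ)) : Matrix (Fin 2) (Fin 2) ℤ) = !![A 1 1, -A 1 0; -A 0 1, A 0 0] := by
  rw [Matrix.SpecialLinearGroup.coe_mul, Matrix.SpecialLinearGroup.coe_mul,
    Matrix.SpecialLinearGroup.coe_inv,
    coe_S, adjugate_fin_two_of, eta_fin_two (A : Matrix _ _ ℤ), mul_fin_two, mul_fin_two]
  simp

def IsElliptic (A : SL(2, ℤ)) : Prop :=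
  trace (A : Matrix (Fin 2) (Fin 2) ℤ) ^ 2 < 4

def ellipticReps : Set SL(2, ℤ) :=
  {⟨!![0, -1; 1, 0], by decide⟩, -⟨!![0, -1; 1, 0], by decide⟩,
    ⟨!![0, -1; 1, 1], by decide⟩, -⟨!![0, -1; 1, 1], by decide⟩,
    ⟨!![-1, -1; 1, 0], by decide⟩, -⟨!![-1, -1; 1, 0], by decide⟩}

/- The anonymous constructors above elaborate at the subtype `{M // M.det = 1}` rather than at
`SL(2, ℤ)`, which blocks `simp` and `decide` on this set; membership is proved positionally. -/
theorem mem_ellipticReps_of_coe_mem {X : SL(2, ℤ)} (h : (X : Matrix (Fin 2) (Fin 2) ℤ) ∈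
    ({!![0, -1; 1, 0], !![0, 1; -1, 0], !![0, -1; 1, 1], !![0, 1; -1, -1], !![-1, -1; 1, 0],
      !![1, 1; -1, 0]} : Finset (Matrix (Fin 2) (Fin 2) ℤ))) : X ∈ ellipticReps := by
  simp only [Finset.mem_insert, Finset.mem_singleton] at h
  rcases h with h | h | h | h | h | h
  exacts [Or.inl (Subtype.ext h), Or.inr (Or.inl (Subtype.ext (h.trans (by decide)))),
    Or.inr (Or.inr (Or.inl (Subtype.ext h))),
    Or.inr (Or.inr (Or.inr (Or.inl (Subtype.ext (h.trans (by decide)))))),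
    Or.inr (Or.inr (Or.inr (Or.inr (Or.inl (Subtype.ext h))))),
    Or.inr (Or.inr (Or.inr (Or.inr (Or.inr (Subtype.ext (h.trans (by decide)))))))]

def offDiagSize (A : SL(2, ℤ)) : ℕ :=
  (A 0 1).natAbs + (A 1 0).natAbs

variable {A : SL(2, ℤ)}

theorem isElliptic_iff : IsElliptic A ↔ (A 0 0 + A 1 1) ^ 2 < 4 := by
  rw [IsElliptic, trace_fin_two]

theorem isElliptic_iff_abs_trace_lt :
    IsElliptic A ↔ |trace (A : Matrix (Fin 2) (Fin 2) ℤ)| < 2 := by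
  rw [IsElliptic, show (4 : ℤ) = 2 ^ 2 by norm_num, sq_lt_sq, abs_two]

theorem IsElliptic.of_isConj {B : SL(2, ℤ)} (hA : IsElliptic A) (h : IsConj A B) :
    IsElliptic B := by
  obtain ⟨g, rfl⟩ := isConj_iff.1 h
  rwa [IsElliptic, SpecialLinearGroup.trace_conj]

theorem IsElliptic.offDiag_mul_neg (hA : IsElliptic A) : A 0 1 * A 1 0 < 0 := by
  have := SpecialLinearGroup.SL2_sq_sub_add_four_mul_eq A
  rw [isElliptic_iff] at hA
  nlinarith [sq_nonneg (A 0 0 - A 1 1)]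

theorem IsElliptic.exists_isConj_abs_le (hA : IsElliptic A) :
    ∃ B, IsConj A B ∧ B 1 0 = A 1 0 ∧ |B 0 1| ≤ |A 1 0| := by
  have hc : A 1 0 ≠ 0 := fun h => by simpa [h] using hA.offDiag_mul_neg
  obtain ⟨n, hn⟩ := Int.exists_abs_add_two_mul_mul_le (A 0 0 - A 1 1) hc
  have hAB : IsConj A (T ^ n * A * (T ^ n)⁻¹) := isConj_iff.2 ⟨_, rfl⟩
  set B := T ^ n * A * (T ^ n)⁻¹
  have hB := coe_T_zpow_conj n A
  have h10 : B 1 0 = A 1 0 := by simp [B, hB]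
  have hdiag : B 0 0 - B 1 1 = A 0 0 - A 1 1 + 2 * A 1 0 * n := by simp [B, hB]; ring
  refine ⟨B, hAB, h10, ?_⟩
  have hBell := hA.of_isConj hAB
  have hneg := hBell.offDiag_mul_neg
  have key := SpecialLinearGroup.SL2_sq_sub_add_four_mul_eq B
  rw [isElliptic_iff] at hBell
  rw [hdiag, h10] at key
  rw [h10] at hneg
  have habs : |B 0 1| * |A 1 0| = -(B 0 1 * A 1 0) := by rw [← abs_mul, abs_of_neg hneg]
  have hsq : (A 0 0 - A 1 1 + 2 * A 1 0 * n) ^ 2 ≤ A 1 0 ^ 2 := sq_le_sq.2 hn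
  have hc1 : 1 ≤ |A 1 0| := Int.one_le_abs hc
  -- `key` gives `4 |B 0 1| |A 1 0| ≤ 4 + (A 1 0)²`, impossible once `|B 0 1| > |A 1 0| ≥ 1`
  nlinarith [sq_nonneg (B 0 0 + B 1 1), sq_abs (A 1 0)]

theorem IsElliptic.exists_isConj_offDiagSize_lt (hA : IsElliptic A) (hne : |A 0 1| ≠ |A 1 0|) :
    ∃ B, IsConj A B ∧ offDiagSize B < offDiagSize A := by
  wlog hlt : |A 1 0| < |A 0 1| generalizing A
  · have hAS : IsConj A (S * A * S⁻¹) := isConj_iff.2 ⟨S, rfl⟩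
    have hS := coe_S_conj A
    have h01 : (S * A * S⁻¹) 0 1 = -A 1 0 := by simp [hS]
    have h10 : (S * A * S⁻¹) 1 0 = -A 0 1 := by simp [hS]
    obtain ⟨B, hSB, hlt'⟩ := this (hA.of_isConj hAS)
      (by rw [h01, h10, abs_neg, abs_neg]; exact hne.symm)
      (by rw [h01, h10, abs_neg, abs_neg]; exact lt_of_le_of_ne (not_lt.1 hlt) hne)
    refine ⟨B, hAS.trans hSB, hlt'.trans_eq ?_⟩
    rw [offDiagSize, offDiagSize, h01, h10, Int.natAbs_neg, Int.natAbs_neg, add_comm]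
  obtain ⟨B, hAB, h10, h01⟩ := hA.exists_isConj_abs_le
  refine ⟨B, hAB, ?_⟩
  rw [Int.abs_eq_natAbs, Int.abs_eq_natAbs] at hlt h01
  rw [offDiagSize, offDiagSize, h10]
  omega

theorem IsElliptic.exists_isConj_abs_eq (hA : IsElliptic A) :
    ∃ B, IsConj A B ∧ |B 0 1| = |B 1 0| := by
  induction hN : offDiagSize A using Nat.strong_induction_on generalizing A with
  | _ N ih =>
  by_cases h : |A 0 1| = |A 1 0|
  · exact ⟨A, IsConj.refl A, h⟩
  obtain ⟨B, hAB, hlt⟩ := hA.exists_isConj_offDiagSize_lt h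
  obtain ⟨C, hBC, hC⟩ := ih _ (hN ▸ hlt) (hA.of_isConj hAB) rfl
  exact ⟨C, hAB.trans hBC, hC⟩

theorem IsElliptic.exists_isConj_mem_ellipticReps_of_abs_eq (hA : IsElliptic A)
    (h : |A 0 1| = |A 1 0|) : ∃ B ∈ ellipticReps, IsConj A B := by
  have key := SpecialLinearGroup.SL2_sq_sub_add_four_mul_eq A
  have hneg := hA.offDiag_mul_neg
  have hdet := A.2
  rw [det_fin_two] at hdet
  rw [isElliptic_iff] at hA
  have hA' : (A : Matrix (Fin 2) (Fin 2) ℤ) = !![A 0 0, A 0 1; A 1 0, A 1 1] := eta_fin_two _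
  have hSA := coe_S_conj A
  generalize A 0 0 = a, A 0 1 = b, A 1 0 = c, A 1 1 = d at *
  obtain rfl : c = -b := by
    rcases abs_eq_abs.1 h with rfl | rfl
    · nlinarith
    · ring
  have hb : b = 1 ∨ b = -1 := by
    have hb0 : b ≠ 0 := by rintro rfl; simp at hneg
    have := Int.abs_le_one_of_sq_mem_Ico (x := a - d) (y := b)
      (by nlinarith [sq_nonneg (a + d)]) (by nlinarith)
    exact (abs_eq zero_le_one).1 (le_antisymm this (Int.one_le_abs hb0))
  have had : a * d = 0 := by rcases hb with rfl | rfl <;> linarith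
  have ht : |a + d| < 2 := abs_lt_of_sq_lt_sq (by norm_num [hA]) zero_le_two
  rw [abs_lt] at ht
  obtain ⟨ha₁, ha₂, hd₁, hd₂⟩ : -1 ≤ a ∧ a ≤ 1 ∧ -1 ≤ d ∧ d ≤ 1 := by
    rcases mul_eq_zero.1 had with rfl | rfl <;> omega
  interval_cases a <;> interval_cases d <;> rcases hb with rfl | rfl
  all_goals first
    | omega
    | exact ⟨A, mem_ellipticReps_of_coe_mem (by rw [hA']; decide), .refl A⟩
    | exact ⟨_, mem_ellipticReps_of_coe_mem (by rw [hSA]; decide), isConj_iff.2 ⟨S, rfl⟩⟩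

end ModularGroup

open ModularGroup in
/-- Every elliptic element of `SL(2,ℤ)` (trace of absolute value `< 2`) is
conjugate in `SL(2,ℤ)` to one of the six matrices `±[[0,-1],[1,0]]`, `±[[0,-1],[1,1]]`,
`±[[-1,-1],[1,0]]`. -/
theorem elliptic_conjugacy_classes (A : SL(2, ℤ)) (hA : |Matrix.trace (A : Matrix (Fin 2) (Fin 2) ℤ)| < 2) :
    ∃ g : SL(2, ℤ),
      g * A * g⁻¹ ∈ ({⟨!![0, -1; 1, 0], by decide⟩, -⟨!![0, -1; 1, 0], by decide⟩,
        ⟨!![0, -1; 1, 1], by decide⟩, -⟨!![0, -1; 1, 1], by decide⟩,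
        ⟨!![-1, -1; 1, 0], by decide⟩, -⟨!![-1, -1; 1, 0], by decide⟩} : Set SL(2, ℤ)) := by
  have hell : IsElliptic A := isElliptic_iff_abs_trace_lt.2 hA
  obtain ⟨B, hAB, hB⟩ := hell.exists_isConj_abs_eq
  obtain ⟨C, hC, hBC⟩ := (hell.of_isConj hAB).exists_isConj_mem_ellipticReps_of_abs_eq hB
  obtain ⟨g, rfl⟩ := isConj_iff.1 (hAB.trans hBC)
  exact ⟨g, hC⟩
end
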